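/- (Hanson–Wright moment inequality for Rademacher chaos) There exists a universal constant C > 0 such that for every positive integer n, every symmetric matrix B ∈ ℝ^{n×n}, and every integer l ≥ 2, if z is uniformly distributed on {-1, +1}^n (i.e., the coordinates z_1, …, z_n are independent uniform ±1 random variables), then E[ |zᵀ B z − tr(B)|^l ] ≤ C^l · max{ √l · ‖B‖_F , l · ‖B‖₂ }^l. -/

import Mathlib

/-- The Frobenius norm `‖B‖_F = sqrt (Σ_{i,j} B i j ^ 2)` of a real square matrix. -/
noncomputable def frobNorm {n : ℕ} (B : Matrix (Fin n) (Fin n) ℝ) : ℝ :=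
  Real.sqrt (∑ i, ∑ j, (B i j) ^ 2)

/-- The spectral norm `‖B‖₂ = sup_{‖x‖₂ = 1} ‖Bx‖₂` of a real square matrix, i.e. the
operator norm of the induced map on Euclidean space. -/
noncomputable def specNorm {n : ℕ} (B : Matrix (Fin n) (Fin n) ℝ) : ℝ :=
  ‖LinearMap.toContinuousLinearMap (Matrix.toEuclideanLin B)‖

/-!
Decoupling: averaging over a random set of indices `c`, the chaos `zᵀBz - tr B` equals `4` times
the average of `zᵀ A_c z`, where `A_c` keeps the entries of `B` with row in `c` and column outside
`c`. Conditionally on the coordinates outside `c`, `zᵀ A_c z` is a Rademacher sum with weights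
`(A_c z)_i`, so Khintchine's inequality bounds its `2k`-th moment by `(2k-1)‼ E ‖A_c z‖^{2k}`.
Now `‖A z‖² = tr (AᵀA) + (zᵀ AᵀA z - tr (AᵀA))` is again a constant plus a chaos, and `AᵀA` has
Frobenius norm at most `‖A‖ ‖A‖_F` and operator norm `‖A‖²`; so moments of order `2k` of a chaos
are controlled by moments of order about `k` of another one, and strong induction on `k` closes
the argument.
-/

open Finset Matrix
open scoped BigOperators Nat Matrix.Norms.L2Operator

theorem pow_expect_le_expect_pow {α : Type*} [Fintype α] [Nonempty α] (f : α → ℝ) {n : ℕ}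
    (hn : Even n) : (𝔼 x, f x) ^ n ≤ 𝔼 x, f x ^ n := by
  have hw : ∑ _x : α, (Fintype.card α : ℝ)⁻¹ = 1 := by simp
  simpa [Fintype.expect_eq_sum_div_card, div_eq_inv_mul, mul_sum] using
    Real.pow_arith_mean_le_arith_mean_pow_of_even univ (fun _ => (Fintype.card α : ℝ)⁻¹) f
      (fun _ _ => by positivity) hw hn

theorem expect_mul_add_pow {α : Type*} (s : Finset α) (g x y : α → ℝ) (n : ℕ) :
    𝔼 b ∈ s, g b * (x b + y b) ^ n =
      ∑ m ∈ range (n + 1), (n.choose m : ℝ) * 𝔼 b ∈ s, g b * x b ^ m * y b ^ (n - m) := by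
  simp_rw [add_pow, mul_sum, expect_sum_comm, mul_expect]
  exact sum_congr rfl fun m _ => expect_congr rfl fun b _ => by ring

theorem sq_expect_abs_pow_add_le {α : Type*} (s : Finset α) (X : α → ℝ) (j₁ j₂ : ℕ) :
    (𝔼 x ∈ s, |X x| ^ (j₁ + j₂)) ^ 2 ≤ (𝔼 x ∈ s, X x ^ (2 * j₁)) * 𝔼 x ∈ s, X x ^ (2 * j₂) := by
  have hsq : ∀ (x : ℝ) (j : ℕ), (|x| ^ j) ^ 2 = x ^ (2 * j) := fun x j => by
    rw [← pow_mul, mul_comm, pow_mul, sq_abs, ← pow_mul]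
  simpa only [pow_add, hsq] using
    expect_mul_sq_le_sq_mul_sq s (fun x => |X x| ^ j₁) (fun x => |X x| ^ j₂)

theorem expect_abs_pow_le_of_even_moments {α : Type*} (s : Finset α) (X : α → ℝ) {r : ℝ}
    (hr : 0 ≤ r) (k : ℕ) (h : ∀ j, 2 * j ≤ k + 1 → 𝔼 x ∈ s, X x ^ (2 * j) ≤ r ^ (2 * j)) :
    𝔼 x ∈ s, |X x| ^ k ≤ r ^ k := by
  have hsplit := sq_expect_abs_pow_add_le s X (k / 2) (k - k / 2)
  rw [Nat.add_sub_cancel' (Nat.div_le_self k 2)] at hsplit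
  refine (pow_le_pow_iff_left₀ (by positivity) (by positivity) two_ne_zero).mp ?_
  calc (𝔼 x ∈ s, |X x| ^ k) ^ 2
      ≤ r ^ (2 * (k / 2)) * r ^ (2 * (k - k / 2)) :=
        hsplit.trans (mul_le_mul (h _ (by omega)) (h _ (by omega))
          (expect_nonneg fun x _ => (even_two_mul _).pow_nonneg _) (by positivity))
    _ = (r ^ k) ^ 2 := by rw [← pow_add, ← pow_mul]; congr 1; omega

theorem sum_range_two_mul_add_one {M : Type*} [AddCommMonoid M] (F : ℕ → M) (k : ℕ) :
    ∑ m ∈ range (2 * k + 1), F m =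
      ∑ t ∈ range (k + 1), F (2 * t) + ∑ t ∈ range k, F (2 * t + 1) := by
  induction k with
  | zero => simp
  | succ k ih =>
    rw [show 2 * (k + 1) + 1 = 2 * k + 1 + 1 + 1 by ring, sum_range_succ, sum_range_succ, ih,
      sum_range_succ (fun t => F (2 * t)) (k + 1), sum_range_succ (fun t => F (2 * t + 1)) k,
      show 2 * k + 1 + 1 = 2 * (k + 1) by ring]
    abel

namespace Nat

theorem factorial_two_mul_eq (m : ℕ) : (2 * m)! = 2 ^ m * m ! * (2 * m - 1)‼ := by
  rcases m with _ | m
  · rfl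
  · rw [show 2 * (m + 1) = (2 * m + 1) + 1 by ring, factorial_eq_mul_doubleFactorial,
      show 2 * m + 1 + 1 = 2 * (m + 1) by ring, doubleFactorial_two_mul,
      show 2 * (m + 1) - 1 = 2 * m + 1 by omega]

theorem choose_mul_doubleFactorial_le {k t : ℕ} (htk : t ≤ k) :
    (2 * k).choose (2 * t) * (2 * (k - t) - 1)‼ ≤ (2 * k - 1)‼ * k.choose t := by
  obtain ⟨u, rfl⟩ := Nat.exists_eq_add_of_le htk
  rw [Nat.add_sub_cancel_left]
  have hbig := choose_mul_factorial_mul_factorial (show 2 * t ≤ 2 * (t + u) by omega)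
  have hsmall := choose_mul_factorial_mul_factorial (show t ≤ t + u by omega)
  rw [show 2 * (t + u) - 2 * t = 2 * u by omega, factorial_two_mul_eq, factorial_two_mul_eq,
    factorial_two_mul_eq, ← hsmall, Nat.add_sub_cancel_left, pow_add] at hbig
  have hid : (2 * (t + u)).choose (2 * t) * (2 * u - 1)‼ * (2 * t - 1)‼ =
      (2 * (t + u) - 1)‼ * (t + u).choose t := by
    refine Nat.eq_of_mul_eq_mul_left (show 0 < 2 ^ t * 2 ^ u * t ! * u ! from by positivity) ?_
    linear_combination hbig
  exact hid ▸ Nat.le_mul_of_pos_right _ (doubleFactorial_pos _)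

theorem doubleFactorial_two_mul_sub_one_le (k : ℕ) : (2 * k - 1)‼ ≤ (2 * k) ^ k := by
  induction k with
  | zero => rfl
  | succ k ih =>
    rw [show 2 * (k + 1) - 1 = 2 * k + 1 by omega, doubleFactorial_add_one, pow_succ, mul_comm]
    gcongr
    · exact ih.trans (Nat.pow_le_pow_left (by omega) k)
    · omega

end Nat

variable {ι : Type*}

def signVec (b : ι → Bool) : ι → ℝ := fun i => if b i then 1 else -1

theorem signVec_mul_self (b : ι → Bool) (i : ι) : signVec b i * signVec b i = 1 := by
  unfold signVec; split_ifs <;> norm_num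

theorem signVec_pow_two_mul (b : ι → Bool) (i : ι) (t : ℕ) : signVec b i ^ (2 * t) = 1 := by
  rw [pow_mul, sq, signVec_mul_self, one_pow]

section Fintype

variable [Fintype ι]

def chaos (M : Matrix ι ι ℝ) (b : ι → Bool) : ℝ := signVec b ⬝ᵥ M *ᵥ signVec b - M.trace

def frobeniusSq (A : Matrix ι ι ℝ) : ℝ := ∑ i, ∑ j, A i j ^ 2

theorem frobeniusSq_nonneg (A : Matrix ι ι ℝ) : 0 ≤ frobeniusSq A := by
  unfold frobeniusSq; positivity

theorem trace_transpose_mul_self (A : Matrix ι ι ℝ) : (Aᵀ * A).trace = frobeniusSq A := by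
  simp only [trace, Matrix.diag, mul_apply, transpose_apply, frobeniusSq, sq]
  exact sum_comm

theorem signVec_dotProduct_mulVec_eq_sum (M : Matrix ι ι ℝ) (b : ι → Bool) :
    signVec b ⬝ᵥ M *ᵥ signVec b = ∑ i, ∑ j, signVec b i * M i j * signVec b j := by
  simp only [dotProduct, mulVec, mul_sum, mul_assoc]

theorem mulVec_dotProduct_mulVec_signVec (A : Matrix ι ι ℝ) (b : ι → Bool) :
    A *ᵥ signVec b ⬝ᵥ A *ᵥ signVec b = frobeniusSq A + chaos (Aᵀ * A) b := by
  rw [chaos, ← trace_transpose_mul_self, add_sub_cancel, ← mulVec_mulVec,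
    dotProduct_mulVec (signVec b), vecMul_transpose]

end Fintype

variable [Fintype ι] [DecidableEq ι]

theorem expect_signVec_mul_eq_zero (a : ι) {f : (ι → Bool) → ℝ} (hf : DependsOn f {a}ᶜ) :
    𝔼 b, signVec b a * f b = 0 := by
  let flip : (ι → Bool) ≃ (ι → Bool) :=
    Function.Involutive.toPerm (fun b => Function.update b a (!b a)) fun b => by simp
  have hflip : ∀ b, f (flip b) = f b := fun b =>
    hf fun i hi => Function.update_of_ne (Set.mem_compl_singleton_iff.mp hi) _ _
  have h := Fintype.expect_equiv flip (fun b => -(signVec b a * f b))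
    (fun b => signVec b a * f b) fun b => by
      have hb : flip b a = !b a := Function.update_self ..
      simp only [hflip, signVec, hb]
      cases b a <;> simp
  rw [expect_neg_distrib] at h
  linarith

theorem expect_signVec (a : ι) : 𝔼 b : ι → Bool, signVec b a = 0 := by
  simpa using expect_signVec_mul_eq_zero a (f := fun _ => 1) fun _ _ _ => rfl

theorem expect_signVec_mul_signVec (i j : ι) :
    𝔼 b : ι → Bool, signVec b i * signVec b j = if i = j then 1 else 0 := by
  split_ifs with hij
  · simp [hij, signVec_mul_self]
  · exact expect_signVec_mul_eq_zero i fun x y h => by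
      simp [signVec, h j (Set.mem_compl_singleton_iff.mpr (Ne.symm hij))]

theorem expect_mul_add_mul_signVec_pow (a : ι) {f u v : (ι → Bool) → ℝ}
    (hf : DependsOn f {a}ᶜ) (hu : DependsOn u {a}ᶜ) (hv : DependsOn v {a}ᶜ) (k : ℕ) :
    𝔼 b, f b * (u b * signVec b a + v b) ^ (2 * k) =
      ∑ t ∈ range (k + 1),
        ((2 * k).choose (2 * t) : ℝ) * 𝔼 b, f b * u b ^ (2 * t) * v b ^ (2 * (k - t)) := by
  have hodd : ∀ t, 𝔼 b, f b * (u b * signVec b a) ^ (2 * t + 1) * v b ^ (2 * k - (2 * t + 1)) = 0 :=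
    fun t => by
      simp_rw [mul_pow, pow_succ, signVec_pow_two_mul, one_mul]
      convert expect_signVec_mul_eq_zero a
        (f := fun b => f b * u b ^ (2 * t) * u b * v b ^ (2 * k - (2 * t + 1)))
        (fun x y h => by simp only [hf h, hu h, hv h]) using 2
      ring
  rw [expect_mul_add_pow, sum_range_two_mul_add_one,
    add_eq_left.mpr (sum_eq_zero fun t _ => by rw [hodd, mul_zero])]
  refine sum_congr rfl fun t _ => congrArg _ <| expect_congr rfl fun b _ => ?_
  rw [mul_pow, signVec_pow_two_mul, mul_one, show 2 * k - 2 * t = 2 * (k - t) by omega]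

/-- Khintchine's inequality, conditionally on the coordinates outside `s`. -/
theorem expect_mul_sum_mul_signVec_pow_le (s : Finset ι) (w : ι → (ι → Bool) → ℝ)
    (hw : ∀ i, DependsOn (w i) (↑s)ᶜ) (g : (ι → Bool) → ℝ) (hg : DependsOn g (↑s)ᶜ)
    (hg₀ : ∀ b, 0 ≤ g b) (k : ℕ) :
    𝔼 b, g b * (∑ i ∈ s, w i b * signVec b i) ^ (2 * k) ≤
      (2 * k - 1)‼ * 𝔼 b, g b * (∑ i ∈ s, w i b ^ 2) ^ k := by
  induction s using Finset.induction_on generalizing g k with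
  | empty =>
    simp only [sum_empty, pow_mul, zero_pow two_ne_zero]
    exact le_mul_of_one_le_left (expect_nonneg fun b _ => mul_nonneg (hg₀ b) (by positivity))
      (mod_cast Nat.doubleFactorial_pos _)
  | insert a s ha ih =>
    have hsub : (↑(insert a s) : Set ι)ᶜ ⊆ {a}ᶜ := by simp
    have hsub' : (↑(insert a s) : Set ι)ᶜ ⊆ (↑s)ᶜ := by simp
    have hrest : DependsOn (fun b => ∑ i ∈ s, w i b * signVec b i) {a}ᶜ := fun x y h =>
      sum_congr rfl fun i hi => by
        have hia : i ∈ ({a}ᶜ : Set ι) := by rintro rfl; exact ha hi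
        rw [(hw i).mono hsub h, signVec, signVec, h i hia]
    simp_rw [sum_insert ha]
    calc 𝔼 b, g b * (w a b * signVec b a + ∑ i ∈ s, w i b * signVec b i) ^ (2 * k)
        = ∑ t ∈ range (k + 1), ((2 * k).choose (2 * t) : ℝ) *
            𝔼 b, g b * w a b ^ (2 * t) * (∑ i ∈ s, w i b * signVec b i) ^ (2 * (k - t)) :=
          expect_mul_add_mul_signVec_pow a (hg.mono hsub) ((hw a).mono hsub) hrest k
      _ ≤ ∑ t ∈ range (k + 1), ((2 * k).choose (2 * t) : ℝ) * ((2 * (k - t) - 1)‼ *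
            𝔼 b, g b * w a b ^ (2 * t) * (∑ i ∈ s, w i b ^ 2) ^ (k - t)) := by
          gcongr with t
          exact ih (fun i => (hw i).mono hsub') _
            (fun x y h => by rw [hg.mono hsub' h, (hw a).mono hsub' h])
            (fun b => mul_nonneg (hg₀ b) ((even_two_mul t).pow_nonneg _)) _
      _ ≤ ∑ t ∈ range (k + 1), (2 * k - 1)‼ * ((k.choose t : ℝ) *
            𝔼 b, g b * (w a b ^ 2) ^ t * (∑ i ∈ s, w i b ^ 2) ^ (k - t)) := by
          refine sum_le_sum fun t ht => ?_
          simp_rw [← mul_assoc, ← pow_mul]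
          gcongr ?_ * _
          · exact expect_nonneg fun b _ => mul_nonneg
              (mul_nonneg (hg₀ b) ((even_two_mul t).pow_nonneg _)) (by positivity)
          · exact_mod_cast Nat.choose_mul_doubleFactorial_le (Nat.lt_succ_iff.mp (mem_range.mp ht))
      _ = (2 * k - 1)‼ * 𝔼 b, g b * (w a b ^ 2 + ∑ i ∈ s, w i b ^ 2) ^ k := by
          rw [expect_mul_add_pow, mul_sum]

theorem expect_signVec_dotProduct_mulVec_pow_le (A : Matrix ι ι ℝ) (s : Finset ι)
    (hrow : ∀ i ∉ s, ∀ j, A i j = 0) (hcol : ∀ i, ∀ j ∈ s, A i j = 0) (k : ℕ) :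
    𝔼 b, (signVec b ⬝ᵥ A *ᵥ signVec b) ^ (2 * k) ≤
      (2 * k - 1)‼ * 𝔼 b, (A *ᵥ signVec b ⬝ᵥ A *ᵥ signVec b) ^ k := by
  have hout : ∀ x : ι → ℝ, ∀ i ∉ s, (A *ᵥ x) i = 0 := fun x i hi => by
    simp [mulVec, dotProduct, hrow i hi]
  have hsum : ∀ v w : ι → ℝ, (∀ i ∉ s, v i = 0) → v ⬝ᵥ w = ∑ i ∈ s, v i * w i := fun v w hv =>
    (sum_subset (subset_univ s) fun i _ hi => by rw [hv i hi, zero_mul]).symm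
  have hdep : ∀ i, DependsOn (fun b => (A *ᵥ signVec b) i) (↑s)ᶜ := fun i x y h =>
    sum_congr rfl fun j _ => by
      by_cases hj : j ∈ s
      · simp [hcol i j hj]
      · simp [signVec, h j hj]
  have := expect_mul_sum_mul_signVec_pow_le s (fun i b => (A *ᵥ signVec b) i) hdep (fun _ => 1)
    (fun _ _ _ => rfl) (fun _ => zero_le_one) k
  simp_rw [one_mul] at this
  convert this using 4
  · rw [dotProduct_comm, hsum _ _ (hout _)]
  · simp_rw [hsum _ _ (hout _), sq]

theorem expect_chaos (M : Matrix ι ι ℝ) : 𝔼 b, chaos M b = 0 := by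
  simp only [chaos, signVec_dotProduct_mulVec_eq_sum]
  rw [expect_sub_distrib, Fintype.expect_const, sub_eq_zero, expect_sum_comm]
  simp_rw [expect_sum_comm, mul_right_comm _ (M _ _), ← expect_mul,
    expect_signVec_mul_signVec, ite_mul, one_mul, zero_mul, sum_ite_eq, mem_univ, if_true]
  rfl

theorem chaos_eq_sum_offDiag (B : Matrix ι ι ℝ) (b : ι → Bool) :
    chaos B b = ∑ i, ∑ j, signVec b i * (if i = j then 0 else B i j) * signVec b j := by
  have hsplit : ∀ i j, signVec b i * B i j * signVec b j =
      signVec b i * (if i = j then 0 else B i j) * signVec b j + if i = j then B i j else 0 := by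
    intro i j
    split_ifs with hij
    · subst hij; rw [mul_right_comm, signVec_mul_self]; ring
    · ring
  simp_rw [chaos, signVec_dotProduct_mulVec_eq_sum, hsplit, sum_add_distrib, sum_ite_eq,
    mem_univ, if_true, trace, Matrix.diag, add_sub_cancel_right]

def decouple (B : Matrix ι ι ℝ) (c : ι → Bool) : Matrix ι ι ℝ :=
  diagonal (fun i => if c i then 1 else 0) * B * diagonal (fun j => if c j then 0 else 1)

theorem decouple_apply (B : Matrix ι ι ℝ) (c : ι → Bool) (i j : ι) :
    decouple B c i j = (if c i then 1 else 0) * B i j * (if c j then 0 else 1) := by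
  simp [decouple, diagonal_mul, mul_diagonal]

theorem expect_decouple_apply (B : Matrix ι ι ℝ) (i j : ι) :
    𝔼 c, decouple B c i j = if i = j then 0 else B i j / 4 := by
  have hmask : ∀ c : ι → Bool, decouple B c i j =
      B i j / 4 * (1 + signVec c i - signVec c j - signVec c i * signVec c j) := fun c => by
    rw [decouple_apply, signVec, signVec]; split_ifs <;> ring
  simp_rw [hmask, ← mul_expect, expect_sub_distrib, expect_add_distrib, Fintype.expect_const,
    expect_signVec, expect_signVec_mul_signVec]
  split_ifs <;> ring

theorem chaos_eq_four_mul_expect_decouple (B : Matrix ι ι ℝ) (b : ι → Bool) :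
    chaos B b = 4 * 𝔼 c, signVec b ⬝ᵥ decouple B c *ᵥ signVec b := by
  simp_rw [chaos_eq_sum_offDiag, signVec_dotProduct_mulVec_eq_sum, expect_sum_comm, mul_sum]
  refine sum_congr rfl fun i _ => sum_congr rfl fun j _ => ?_
  rw [← expect_mul, ← mul_expect, expect_decouple_apply]
  split_ifs <;> ring

theorem frobeniusSq_decouple_le (B : Matrix ι ι ℝ) (c : ι → Bool) :
    frobeniusSq (decouple B c) ≤ frobeniusSq B := by
  refine sum_le_sum fun i _ => sum_le_sum fun j _ => ?_
  rw [decouple_apply]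
  split_ifs <;> simp [sq_nonneg]

theorem norm_decouple_le (B : Matrix ι ι ℝ) (c : ι → Bool) : ‖decouple B c‖ ≤ ‖B‖ := by
  have hdiag : ∀ v : ι → ℝ, (∀ i, v i = 0 ∨ v i = 1) → ‖(diagonal v : Matrix ι ι ℝ)‖ ≤ 1 :=
    fun v hv => by
      rw [l2_opNorm_diagonal]
      refine pi_norm_le_iff_of_nonneg zero_le_one |>.mpr fun i => ?_
      rcases hv i with h | h <;> simp [h]
  have h₁ := hdiag (fun i => if c i then 1 else 0) fun i => by split_ifs <;> simp
  have h₂ := hdiag (fun i => if c i then 0 else 1) fun i => by split_ifs <;> simp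
  calc ‖decouple B c‖ ≤ ‖(diagonal fun i => if c i then 1 else 0 : Matrix ι ι ℝ)‖ * ‖B‖ *
        ‖(diagonal fun i => if c i then 0 else 1 : Matrix ι ι ℝ)‖ :=
        (l2_opNorm_mul _ _).trans (by gcongr; exact l2_opNorm_mul _ _)
    _ ≤ 1 * ‖B‖ * 1 := by gcongr
    _ = ‖B‖ := by ring

theorem norm_transpose_mul_self (A : Matrix ι ι ℝ) : ‖Aᵀ * A‖ = ‖A‖ ^ 2 := by
  rw [← conjTranspose_eq_transpose_of_trivial, l2_opNorm_conjTranspose_mul_self, sq]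

theorem sum_mulVec_sq_le (A : Matrix ι ι ℝ) (x : ι → ℝ) :
    ∑ i, (A *ᵥ x) i ^ 2 ≤ ‖A‖ ^ 2 * ∑ i, x i ^ 2 := by
  simpa [mul_pow, EuclideanSpace.norm_sq_eq] using
    pow_le_pow_left₀ (norm_nonneg _) (l2_opNorm_mulVec A (WithLp.toLp 2 x)) 2

theorem frobeniusSq_mul_le (A C : Matrix ι ι ℝ) :
    frobeniusSq (A * C) ≤ ‖A‖ ^ 2 * frobeniusSq C := by
  unfold frobeniusSq
  rw [sum_comm, sum_comm (f := fun i j => C i j ^ 2), mul_sum]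
  refine sum_le_sum fun j _ => ?_
  simpa [mulVec, dotProduct, mul_apply] using sum_mulVec_sq_le A (fun k => C k j)

theorem frobeniusSq_transpose_mul_self_le (A : Matrix ι ι ℝ) :
    frobeniusSq (Aᵀ * A) ≤ ‖A‖ ^ 2 * frobeniusSq A := by
  simpa [← conjTranspose_eq_transpose_of_trivial, l2_opNorm_conjTranspose] using
    frobeniusSq_mul_le Aᵀ A

theorem expect_chaos_pow_le_of_forall_norm_le (B : Matrix ι ι ℝ) (k : ℕ) {R : ℝ}
    (hR : ∀ A : Matrix ι ι ℝ, ‖A‖ ≤ ‖B‖ → frobeniusSq A ≤ frobeniusSq B →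
      𝔼 b, (A *ᵥ signVec b ⬝ᵥ A *ᵥ signVec b) ^ k ≤ R) :
    𝔼 b, chaos B b ^ (2 * k) ≤ 16 ^ k * (2 * k - 1)‼ * R := by
  have hdecoupled : ∀ c, 𝔼 b, (signVec b ⬝ᵥ decouple B c *ᵥ signVec b) ^ (2 * k) ≤
      (2 * k - 1)‼ * R := fun c =>
    (expect_signVec_dotProduct_mulVec_pow_le (decouple B c) {i | c i}
      (fun i hi j => by simp_all [decouple_apply]) (fun i j hj => by simp_all [decouple_apply])
      k).trans (mul_le_mul_of_nonneg_left
        (hR _ (norm_decouple_le B c) (frobeniusSq_decouple_le B c)) (by positivity))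
  calc 𝔼 b, chaos B b ^ (2 * k)
      = 16 ^ k * 𝔼 b, (𝔼 c, signVec b ⬝ᵥ decouple B c *ᵥ signVec b) ^ (2 * k) := by
        simp_rw [chaos_eq_four_mul_expect_decouple, mul_pow, pow_mul (4 : ℝ)]
        rw [mul_expect]
        norm_num
    _ ≤ 16 ^ k * 𝔼 b, 𝔼 c, (signVec b ⬝ᵥ decouple B c *ᵥ signVec b) ^ (2 * k) := by
        gcongr with b
        exact pow_expect_le_expect_pow _ (even_two_mul k)
    _ = 16 ^ k * 𝔼 c, 𝔼 b, (signVec b ⬝ᵥ decouple B c *ᵥ signVec b) ^ (2 * k) := by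
        rw [expect_comm]
    _ ≤ 16 ^ k * ((2 * k - 1)‼ * R) := by
        gcongr
        exact expect_le univ_nonempty fun c _ => hdecoupled c
    _ = 16 ^ k * (2 * k - 1)‼ * R := by ring

theorem expect_mulVec_dotProduct_mulVec_pow_le {A : Matrix ι ι ℝ} {K V : ℝ} (hK : 1 ≤ K)
    (k : ℕ) (hA : frobeniusSq A ≤ V) (hchaos : 𝔼 b, |chaos (Aᵀ * A) b| ^ k ≤ (K * V) ^ k) :
    𝔼 b, (A *ᵥ signVec b ⬝ᵥ A *ᵥ signVec b) ^ k ≤ (2 * K * V) ^ k := by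
  rcases Nat.eq_zero_or_pos k with rfl | hk
  · simp
  have hV : 0 ≤ V := (frobeniusSq_nonneg A).trans hA
  calc 𝔼 b, (A *ᵥ signVec b ⬝ᵥ A *ᵥ signVec b) ^ k
      ≤ 𝔼 b, 2 ^ (k - 1) * (V ^ k + |chaos (Aᵀ * A) b| ^ k) := by
        refine expect_le_expect fun b _ => ?_
        have hnonneg : 0 ≤ A *ᵥ signVec b ⬝ᵥ A *ᵥ signVec b :=
          sum_nonneg fun i _ => mul_self_nonneg _
        rw [mulVec_dotProduct_mulVec_signVec] at hnonneg ⊢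
        calc (frobeniusSq A + chaos (Aᵀ * A) b) ^ k ≤ (V + |chaos (Aᵀ * A) b|) ^ k := by
              gcongr
              exact le_abs_self _
          _ ≤ _ := add_pow_le hV (abs_nonneg _) k
    _ ≤ 2 ^ (k - 1) * ((K * V) ^ k + (K * V) ^ k) := by
        rw [← mul_expect, expect_add_distrib, Fintype.expect_const]
        gcongr
        exact le_mul_of_one_le_left hV hK
    _ = (2 * K * V) ^ k := by
        rw [← two_mul, ← mul_assoc, ← pow_succ, Nat.sub_add_cancel hk]
        ring

theorem expect_chaos_pow_le (B : Matrix ι ι ℝ) (k : ℕ) {r : ℝ}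
    (hF : 2 * k * frobeniusSq B ≤ r ^ 2) (hS : 2 * k * ‖B‖ ≤ r) :
    𝔼 b, chaos B b ^ (2 * k) ≤ (64 * r) ^ (2 * k) := by
  induction k using Nat.strong_induction_on generalizing B r with
  | _ k ih =>
  obtain rfl | rfl | hk : k = 0 ∨ k = 1 ∨ 2 ≤ k := by omega
  · simp
  · refine (expect_chaos_pow_le_of_forall_norm_le B 1 (R := r ^ 2 / 2) fun A _ hA => ?_).trans ?_
    · simp_rw [pow_one, mulVec_dotProduct_mulVec_signVec, expect_add_distrib, expect_chaos,
        Fintype.expect_const, add_zero]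
      push_cast at hF
      linarith
    · norm_num
      nlinarith [sq_nonneg r]
  have hk₀ : (0 : ℝ) < 2 * k := by positivity
  -- at this scale `Aᵀ * A` meets the hypotheses at every order `j ≤ k`, if `A` is dominated by `B`
  set V := r ^ 2 / (2 * k)
  have h2kV : 2 * k * V = r ^ 2 := mul_div_cancel₀ _ hk₀.ne'
  have hBF : frobeniusSq B ≤ V := by rw [le_div_iff₀ hk₀]; linarith
  have hBS : 2 * k * ‖B‖ ^ 2 ≤ V := by
    rw [le_div_iff₀ hk₀]
    nlinarith [pow_le_pow_left₀ (by positivity) hS 2]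
  refine (expect_chaos_pow_le_of_forall_norm_le B k (R := (2 * 64 * V) ^ k) fun A hAS hAF =>
    expect_mulVec_dotProduct_mulVec_pow_le (by norm_num) k (hAF.trans hBF) ?_).trans ?_
  · refine expect_abs_pow_le_of_even_moments _ _ (by positivity) k fun j hj => ?_
    have hAj : 2 * j * ‖A‖ ^ 2 ≤ V :=
      le_trans (by gcongr; exact_mod_cast (by omega : j ≤ k)) hBS
    refine ih j (by omega) _ ?_ (by rwa [norm_transpose_mul_self])
    calc 2 * j * frobeniusSq (Aᵀ * A) ≤ 2 * j * ‖A‖ ^ 2 * frobeniusSq A := by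
          rw [mul_assoc _ (‖A‖ ^ 2)]; gcongr; exact frobeniusSq_transpose_mul_self_le A
      _ ≤ V * V :=
          mul_le_mul hAj (hAF.trans hBF) (frobeniusSq_nonneg A) (hAj.trans' (by positivity))
      _ = V ^ 2 := (sq V).symm
  · calc 16 ^ k * (2 * k - 1)‼ * (2 * 64 * V) ^ k ≤ 16 ^ k * (2 * k) ^ k * (2 * 64 * V) ^ k := by
          gcongr
          exact_mod_cast Nat.doubleFactorial_two_mul_sub_one_le k
      _ = (2048 * r ^ 2) ^ k := by rw [← h2kV, ← mul_pow, ← mul_pow]; ring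
      _ ≤ (64 * r) ^ (2 * k) := by
          rw [pow_mul]
          gcongr
          nlinarith [sq_nonneg r]

theorem frobNorm_sq {n : ℕ} (B : Matrix (Fin n) (Fin n) ℝ) : frobNorm B ^ 2 = frobeniusSq B :=
  Real.sq_sqrt (frobeniusSq_nonneg B)

theorem specNorm_eq_norm {n : ℕ} (B : Matrix (Fin n) (Fin n) ℝ) : specNorm B = ‖B‖ := rfl

/-- **Hanson–Wright moment inequality for Rademacher chaos.**
There is a universal constant `C > 0` such that for every symmetric `B ∈ ℝ^{n×n}`,
every integer `l ≥ 2`, and `z` uniform on `{-1,+1}^n`,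
`E[ |zᵀ B z - tr B|^l ] ≤ C^l · max(√l ‖B‖_F, l ‖B‖₂)^l`.
The expectation over the uniform sign vector `z` is written as the average over all
`2^n` assignments `b : Fin n → Bool`, with `z i = if b i then 1 else -1`. -/
theorem hanson_wright_moment :
    ∃ C : ℝ, 0 < C ∧
      ∀ (n : ℕ), 0 < n → ∀ (B : Matrix (Fin n) (Fin n) ℝ), B.IsSymm →
        ∀ (l : ℕ), 2 ≤ l →
          (1 / 2 ^ n : ℝ) *
              ∑ b : Fin n → Bool,
                |(∑ i, ∑ j,
                    (if b i then (1 : ℝ) else -1) * B i j * (if b j then (1 : ℝ) else -1))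
                  - Matrix.trace B| ^ l
            ≤ C ^ l * (max (Real.sqrt l * frobNorm B) ((l : ℝ) * specNorm B)) ^ l := by
  refine ⟨128, by norm_num, fun n _ B _ l _ => ?_⟩
  set r := max (Real.sqrt l * frobNorm B) ((l : ℝ) * specNorm B)
  have hfrob : 0 ≤ Real.sqrt l * frobNorm B := mul_nonneg (Real.sqrt_nonneg _) (Real.sqrt_nonneg _)
  have hr : 0 ≤ r := le_max_of_le_left hfrob
  have hF : l * frobeniusSq B ≤ r ^ 2 := by
    calc l * frobeniusSq B = (Real.sqrt l * frobNorm B) ^ 2 := by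
          rw [mul_pow, Real.sq_sqrt (Nat.cast_nonneg l), frobNorm_sq]
      _ ≤ r ^ 2 := pow_le_pow_left₀ hfrob (le_max_left _ _) 2
  have hS : l * ‖B‖ ≤ r := specNorm_eq_norm B ▸ le_max_right _ _
  have hmoments : ∀ j, 2 * j ≤ l + 1 → 𝔼 b, chaos B b ^ (2 * j) ≤ (64 * (2 * r)) ^ (2 * j) :=
    fun j hj => by
      have hjl : (2 * j : ℝ) ≤ 2 * l := by exact_mod_cast (by omega : 2 * j ≤ 2 * l)
      refine expect_chaos_pow_le B j ?_ ?_
      · nlinarith [frobeniusSq_nonneg B]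
      · nlinarith [norm_nonneg B]
  calc (1 / 2 ^ n : ℝ) * ∑ b : Fin n → Bool, |(∑ i, ∑ j,
          (if b i then (1 : ℝ) else -1) * B i j * (if b j then (1 : ℝ) else -1)) - B.trace| ^ l
      = 𝔼 b, |chaos B b| ^ l := by
        simp [Fintype.expect_eq_sum_div_card, chaos, signVec_dotProduct_mulVec_eq_sum, signVec,
          div_eq_inv_mul]
    _ ≤ (64 * (2 * r)) ^ l :=
        expect_abs_pow_le_of_even_moments _ _ (by linarith) l hmoments
    _ = 128 ^ l * r ^ l := by ring
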